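/- arXiv:2206.07792 — 5 statements merged into one kernel-verified Lean document; each statement's English description precedes it below -/
import Mathlib

section
/- Let X be a real normed space, Y a real topological vector space, λ > 0, and let π : X → Y be a quotient map satisfying condition (★) with exponent λ. If φ : Y → X is an intrinsically L-Lipschitz section of π, then for every α ∈ ℝ \ {0} the map αφ : Y → X is an intrinsically L-Lipschitz section of the map (1/α^[λ])·π; that is, (1/α^[λ])·π(αφ(y)) = y for all y ∈ Y, and ‖αφ(y) − αφ(z)‖ ≤ L·dist(αφ(y), ((1/α^[λ])π)⁻¹(z)) for all y, z ∈ Y, where ((1/α^[λ])π)⁻¹(z) := {x ∈ X : π(x) = α^[λ]·z}. -/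
/-!
Condition (★) with `β = 0` gives `π (α • x) = α^[λ] • π x`, and `α^[λ] ≠ 0` for `α ≠ 0`.
Hence `αφ` is a section of `(α^[λ])⁻¹ • π`, and the fibre of this map over `z` is the dilate
`α • π⁻¹' {z}`. Since dilation by `α` multiplies both distances and distances to sets by `|α|`,
the intrinsic Lipschitz inequality for `φ` transfers to `αφ` with the same constant.
-/

/-- The paper's `α^[λ]`. -/
noncomputable def spow (α lam : ℝ) : ℝ := Real.sign α * |α| ^ lam

open Pointwise

lemma spow_zero_left (lam : ℝ) : spow 0 lam = 0 := by
  simp [spow]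

lemma spow_ne_zero {α : ℝ} (lam : ℝ) (hα : α ≠ 0) : spow α lam ≠ 0 :=
  mul_ne_zero (mt Real.sign_eq_zero_iff.mp hα) (Real.rpow_pos_of_pos (abs_pos.mpr hα) lam).ne'

lemma apply_smul_eq_spow_smul {X Y : Type*} [AddCommGroup X] [Module ℝ X] [AddCommGroup Y] [Module ℝ Y]
    {lam : ℝ} {π : X → Y}
    (hstar : ∀ x₁ x₂ : X, ∀ α β : ℝ, (α, β) ≠ (0, 0) →
      π (α • x₁ + β • x₂) = spow α lam • π x₁ + spow β lam • π x₂)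
    {α : ℝ} (hα : α ≠ 0) (x : X) : π (α • x) = spow α lam • π x := by
  simpa [spow_zero_left] using hstar x x α 0 (by simp [hα])

lemma setOf_apply_eq_smul_eq_smul_preimage {X Y : Type*} [AddCommGroup X] [Module ℝ X]
    [AddCommGroup Y] [Module ℝ Y] {π : X → Y} {α c : ℝ} (hα : α ≠ 0) (hc : c ≠ 0)
    (hπ : ∀ x, π (α • x) = c • π x) (z : Y) :
    {x : X | π x = c • z} = α • π ⁻¹' {z} := by
  ext x
  have hx : π x = c • π (α⁻¹ • x) := by rw [← hπ, smul_inv_smul₀ hα]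
  rw [Set.mem_smul_set_iff_inv_smul_mem₀ hα, Set.mem_ofPred_eq, hx, smul_right_inj hc]
  rfl

lemma norm_smul_sub_smul_le_mul_infDist_smul {X : Type*} [NormedAddCommGroup X]
    [NormedSpace ℝ X] {a b : X} {s : Set X} {L : ℝ} (h : dist a b ≤ L * Metric.infDist a s)
    {α : ℝ} (hα : α ≠ 0) :
    ‖α • a - α • b‖ ≤ L * Metric.infDist (α • a) (α • s) := by
  rw [← smul_sub, norm_smul, Real.norm_eq_abs, ← dist_eq_norm, infDist_smul₀ hα, mul_left_comm]
  exact mul_le_mul_of_nonneg_left h (abs_nonneg α)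

theorem statement_2_general {X Y : Type*} [NormedAddCommGroup X] [NormedSpace ℝ X]
    [AddCommGroup Y] [Module ℝ Y]
    (lam : ℝ) (π : X → Y)
    (hstar : ∀ x₁ x₂ : X, ∀ α β : ℝ, (α, β) ≠ (0, 0) →
      π (α • x₁ + β • x₂) = spow α lam • π x₁ + spow β lam • π x₂)
    (φ : Y → X) (L : ℝ)
    (hsec : ∀ y, π (φ y) = y)
    (hlip : ∀ y₁ y₂ : Y, dist (φ y₁) (φ y₂) ≤ L * Metric.infDist (φ y₁) (π ⁻¹' {y₂}))
    (α : ℝ) (hα : α ≠ 0) :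
    (∀ y : Y, (spow α lam)⁻¹ • π (α • φ y) = y) ∧
    (∀ y z : Y, ‖α • φ y - α • φ z‖ ≤
      L * Metric.infDist (α • φ y) {x : X | π x = spow α lam • z}) := by
  have hsmul := apply_smul_eq_spow_smul hstar hα
  have hspow := spow_ne_zero lam hα
  refine ⟨fun y => ?_, fun y z => ?_⟩
  · rw [hsmul, hsec, inv_smul_smul₀ hspow]
  · rw [setOf_apply_eq_smul_eq_smul_preimage hα hspow hsmul]
    exact norm_smul_sub_smul_le_mul_infDist_smul (hlip y z) hα

/-- If `π : X → Y` is a quotient map satisfying condition (★) with exponent `λ > 0`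
and `φ` is an intrinsically `L`-Lipschitz section of `π`, then for every `α ≠ 0`
the map `αφ` is an intrinsically `L`-Lipschitz section of `(1/α^[λ])·π`. -/
theorem statement_2 {X Y : Type*} [NormedAddCommGroup X] [NormedSpace ℝ X]
    [AddCommGroup Y] [Module ℝ Y] [TopologicalSpace Y]
    [IsTopologicalAddGroup Y] [ContinuousSMul ℝ Y]
    (lam : ℝ) (hlam : 0 < lam) (π : X → Y)
    (hcont : Continuous π) (hopen : IsOpenMap π) (hsurj : Function.Surjective π)
    (hstar : ∀ x₁ x₂ : X, ∀ α β : ℝ, (α, β) ≠ (0, 0) →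
      π (α • x₁ + β • x₂) = spow α lam • π x₁ + spow β lam • π x₂)
    (φ : Y → X) (L : ℝ) (hL : 1 ≤ L)
    (hsec : ∀ y, π (φ y) = y)
    (hlip : ∀ y₁ y₂ : Y, dist (φ y₁) (φ y₂) ≤ L * Metric.infDist (φ y₁) (π ⁻¹' {y₂}))
    (α : ℝ) (hα : α ≠ 0) :
    (∀ y : Y, (spow α lam)⁻¹ • π (α • φ y) = y) ∧
    (∀ y z : Y, ‖α • φ y - α • φ z‖ ≤
      L * Metric.infDist (α • φ y) {x : X | π x = spow α lam • z}) :=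
  statement_2_general lam π hstar φ L hsec hlip α hα
end

section
/- Let X be a real normed space, Y a real topological vector space, λ > 0, and let π : X → Y be a quotient map satisfying condition (★) with exponent λ. Then for all y₁, y₂ ∈ Y and all α ∈ ℝ \ {0}: |α| · dist(π⁻¹(y₁), π⁻¹(y₂)) = dist( ((1/α^[λ])π)⁻¹(y₁), ((1/α^[λ])π)⁻¹(y₂) ), where ((1/α^[λ])π)⁻¹(y) := {x ∈ X : π(x) = α^[λ]·y} and dist(A,B) := inf{‖a−b‖ : a ∈ A, b ∈ B}. -/
/-- Distance between two subsets of a normed space: `inf{‖a−b‖ : a ∈ A, b ∈ B}`. -/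
noncomputable def setDist {X : Type*} [MetricSpace X] (A B : Set X) : ℝ :=
  sInf (Set.image2 dist A B)

open Pointwise

lemma spow_inv_mul_spow (lam : ℝ) {α : ℝ} (hα : α ≠ 0) : spow α⁻¹ lam * spow α lam = 1 := by
  have hpow : |α| ^ lam ≠ 0 := (Real.rpow_pos_of_pos (abs_pos.mpr hα) lam).ne'
  have hsign : Real.sign α * Real.sign α = 1 := by
    rcases hα.lt_or_gt with h | h <;> simp [Real.sign_of_neg, Real.sign_of_pos, h]
  rw [spow, spow, abs_inv, Real.inv_rpow (abs_nonneg α), Real.sign_inv,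
    mul_mul_mul_comm, hsign, inv_mul_cancel₀ hpow, one_mul]

lemma setDist_smul {X : Type*} [NormedAddCommGroup X] [NormedSpace ℝ X] (α : ℝ) (A B : Set X) :
    setDist (α • A) (α • B) = |α| * setDist A B := by
  have hdist : Set.image2 dist (α • A) (α • B) = |α| • Set.image2 dist A B := by
    simp only [← Set.image_smul, Set.image2_image_left, Set.image2_image_right, Set.image_image2,
      dist_smul₀, Real.norm_eq_abs, smul_eq_mul]
  rw [setDist, setDist, hdist, Real.sInf_smul_of_nonneg (abs_nonneg α), smul_eq_mul]

section Homogeneous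

variable {X Y : Type*} [AddCommGroup X] [Module ℝ X] [AddCommGroup Y] [Module ℝ Y]
  {lam : ℝ} {π : X → Y}

lemma map_smul_eq_spow_smul_of_star
    (hstar : ∀ x₁ x₂ : X, ∀ α β : ℝ, (α, β) ≠ (0, 0) →
      π (α • x₁ + β • x₂) = spow α lam • π x₁ + spow β lam • π x₂)
    ⦃α : ℝ⦄ (hα : α ≠ 0) (x : X) : π (α • x) = spow α lam • π x := by
  simpa [spow_zero_left] using hstar x x α 0 (by simp [hα])

lemma setOf_eq_spow_smul_eq_smul_preimage
    (hhom : ∀ ⦃α : ℝ⦄, α ≠ 0 → ∀ x : X, π (α • x) = spow α lam • π x)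
    {α : ℝ} (hα : α ≠ 0) (y : Y) :
    {x : X | π x = spow α lam • y} = α • π ⁻¹' {y} := by
  ext x
  rw [Set.mem_smul_set_iff_inv_smul_mem₀ hα, Set.mem_ofPred_eq, Set.mem_preimage,
    Set.mem_singleton_iff, hhom (inv_ne_zero hα)]
  constructor
  · intro hx
    rw [hx, smul_smul, spow_inv_mul_spow lam hα, one_smul]
  · intro hx
    rw [← hx, smul_smul, mul_comm, spow_inv_mul_spow lam hα, one_smul]

end Homogeneous

theorem statement_6_general {X Y : Type*} [NormedAddCommGroup X] [NormedSpace ℝ X]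
    [AddCommGroup Y] [Module ℝ Y]
    (lam : ℝ) (π : X → Y)
    (hstar : ∀ x₁ x₂ : X, ∀ α β : ℝ, (α, β) ≠ (0, 0) →
      π (α • x₁ + β • x₂) = spow α lam • π x₁ + spow β lam • π x₂) :
    ∀ (y₁ y₂ : Y) (α : ℝ), α ≠ 0 →
      |α| * setDist (π ⁻¹' {y₁}) (π ⁻¹' {y₂}) =
        setDist {x : X | π x = spow α lam • y₁} {x : X | π x = spow α lam • y₂} := by
  intro y₁ y₂ α hα
  have hhom := map_smul_eq_spow_smul_of_star hstar
  rw [setOf_eq_spow_smul_eq_smul_preimage hhom hα, setOf_eq_spow_smul_eq_smul_preimage hhom hα,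
    setDist_smul]

/-- If `π : X → Y` is a quotient map satisfying condition (★) with exponent `λ > 0`,
then `|α|·dist(π⁻¹(y₁),π⁻¹(y₂)) = dist(((1/α^[λ])π)⁻¹(y₁),((1/α^[λ])π)⁻¹(y₂))`
for all `y₁, y₂ ∈ Y` and `α ≠ 0`. -/
theorem statement_6 {X Y : Type*} [NormedAddCommGroup X] [NormedSpace ℝ X]
    [AddCommGroup Y] [Module ℝ Y] [TopologicalSpace Y]
    [IsTopologicalAddGroup Y] [ContinuousSMul ℝ Y]
    (lam : ℝ) (hlam : 0 < lam) (π : X → Y)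
    (hcont : Continuous π) (hopen : IsOpenMap π) (hsurj : Function.Surjective π)
    (hstar : ∀ x₁ x₂ : X, ∀ α β : ℝ, (α, β) ≠ (0, 0) →
      π (α • x₁ + β • x₂) = spow α lam • π x₁ + spow β lam • π x₂) :
    ∀ (y₁ y₂ : Y) (α : ℝ), α ≠ 0 →
      |α| * setDist (π ⁻¹' {y₁}) (π ⁻¹' {y₂}) =
        setDist {x : X | π x = spow α lam • y₁} {x : X | π x = spow α lam • y₂} :=
  statement_6_general lam π hstar
end

section
/- Let X be a metric space, Y a topological space, π : X → Y a quotient map, and λ > 0. Suppose D : X → X and E : Y → Y are bijections such that d(D(x), D(x')) = λ·d(x, x') for all x, x' ∈ X and π ∘ D = E ∘ π. If φ : Y → X is an intrinsically L-Lipschitz section of π, then D ∘ φ is an intrinsically (max{1,λ}·L)-Lipschitz section of the quotient map E⁻¹ ∘ π : X → Y; that is, (E⁻¹ ∘ π)(D(φ(y))) = y for all y ∈ Y, and d(D(φ(y₁)), D(φ(y₂))) ≤ max{1,λ}·L · dist( D(φ(y₁)), (E⁻¹∘π)⁻¹(y₂) ) for all y₁, y₂ ∈ Y. -/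
/-- If `π : X → Y` is a quotient map, `D : X → X` and `E : Y ≃ Y` are bijections with
`d(D(x),D(x')) = λ·d(x,x')` and `π ∘ D = E ∘ π`, and `φ` is an intrinsically
`L`-Lipschitz section of `π`, then `D ∘ φ` is an intrinsically `(max{1,λ}·L)`-Lipschitz
section of `E⁻¹ ∘ π`. -/
theorem statement_8 {X Y : Type*} [MetricSpace X] [TopologicalSpace Y]
    (π : X → Y)
    (hcont : Continuous π) (hopen : IsOpenMap π) (hsurj : Function.Surjective π)
    (lam : ℝ) (hlam : 0 < lam)
    (D : X → X) (hD : Function.Bijective D) (E : Y ≃ Y)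
    (hdil : ∀ x x' : X, dist (D x) (D x') = lam * dist x x')
    (hcomm : ∀ x : X, π (D x) = E (π x))
    (φ : Y → X) (L : ℝ) (hL : 1 ≤ L)
    (hsec : ∀ y, π (φ y) = y)
    (hlip : ∀ y₁ y₂ : Y, dist (φ y₁) (φ y₂) ≤ L * Metric.infDist (φ y₁) (π ⁻¹' {y₂})) :
    (∀ y : Y, E.symm (π (D (φ y))) = y) ∧
    (∀ y₁ y₂ : Y, dist (D (φ y₁)) (D (φ y₂)) ≤
      max 1 lam * L * Metric.infDist (D (φ y₁)) {x : X | E.symm (π x) = y₂}) := by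
  have hsec' : ∀ y : Y, E.symm (π (D (φ y))) = y := by
    intro y
    rw [hcomm, hsec, Equiv.symm_apply_apply]
  refine ⟨hsec', fun y₁ y₂ => ?_⟩
  set S : Set X := {x : X | E.symm (π x) = y₂} with hS
  have hSne : S.Nonempty := ⟨D (φ y₂), hsec' y₂⟩
  have hI0 : 0 ≤ Metric.infDist (φ y₁) (π ⁻¹' {y₂}) := Metric.infDist_nonneg
  have key : lam * Metric.infDist (φ y₁) (π ⁻¹' {y₂}) ≤ Metric.infDist (D (φ y₁)) S := by
    by_contra hcon
    push_neg at hcon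
    obtain ⟨z, hz, hzd⟩ := (Metric.infDist_lt_iff hSne).mp hcon
    obtain ⟨a, rfl⟩ := hD.2 z
    have ha : π a = y₂ := by
      have := hz
      simp only [hS, Set.mem_setOf_eq, hcomm] at this
      rwa [Equiv.symm_apply_apply] at this
    rw [hdil] at hzd
    have : Metric.infDist (φ y₁) (π ⁻¹' {y₂}) ≤ dist (φ y₁) a :=
      Metric.infDist_le_dist_of_mem (by simp [ha])
    nlinarith
  calc dist (D (φ y₁)) (D (φ y₂)) = lam * dist (φ y₁) (φ y₂) := hdil _ _
    _ ≤ lam * (L * Metric.infDist (φ y₁) (π ⁻¹' {y₂})) := by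
        exact mul_le_mul_of_nonneg_left (hlip y₁ y₂) hlam.le
    _ = L * (lam * Metric.infDist (φ y₁) (π ⁻¹' {y₂})) := by ring
    _ ≤ max 1 lam * L * (lam * Metric.infDist (φ y₁) (π ⁻¹' {y₂})) := by
        rw [mul_assoc]
        refine le_mul_of_one_le_left ?_ (le_max_left 1 lam)
        have : 0 ≤ L := le_trans zero_le_one hL
        positivity
    _ ≤ max 1 lam * L * Metric.infDist (D (φ y₁)) S := by
        have h1 : (0:ℝ) ≤ max 1 lam * L := by positivity
        exact mul_le_mul_of_nonneg_left key h1
end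

section
/- Consider a step-2 Carnot group structure on G = ℝ^m × ℝ^n with H, N, π_N and dilations δ_λ as below, and let λ > 0. Let d : G × G → [0,∞) be a distance on G satisfying d(δ_λ(g), δ_λ(q)) = λ·d(g, q) for all g, q ∈ G. If φ : N → G is an intrinsically L-Lipschitz section of π_N with respect to d, then δ_λ ∘ φ : N → G is an intrinsically (max{1,λ}·L)-Lipschitz section of the map δ_{1/λ} ∘ π_N : G → N; that is, δ_{1/λ}(π_N(δ_λ(φ(y)))) = y for all y ∈ N, and d(δ_λ(φ(y₁)), δ_λ(φ(y₂))) ≤ max{1,λ}·L · dist( δ_λ(φ(y₁)), {p ∈ G : δ_{1/λ}(π_N(p)) = y₂} ) for all y₁, y₂ ∈ N. -/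
open Matrix Pointwise

/-- The underlying space `ℝ^m × ℝ^n` of a step-2 Carnot group. -/
abbrev G2 (m n : ℕ) := (Fin m → ℝ) × (Fin n → ℝ)

/-- The step-2 Carnot group product determined by the matrices `B⁽¹⁾,…,B⁽ⁿ⁾`:
`p·q = (p¹+q¹, p²+q²+½⟨Bp¹,q¹⟩)`. -/
noncomputable def gmul {m n : ℕ} (B : Fin n → Matrix (Fin m) (Fin m) ℝ) (p q : G2 m n) : G2 m n :=
  (p.1 + q.1, p.2 + q.2 + (1 / 2 : ℝ) • fun ℓ => (B ℓ).mulVec p.1 ⬝ᵥ q.1)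

/-- The vector `(c,0,…,0) ∈ ℝ^m`. -/
noncomputable def fv {m : ℕ} [NeZero m] (c : ℝ) : Fin m → ℝ := fun i => if i = 0 then c else 0

/-- The projection `π_N(p) = (−p₁,0,…,0)·p` onto `N = {(0,x₂,…,x_{m+n})}` along
`H = {(x₁,0,…,0)}`. -/
noncomputable def piN {m n : ℕ} [NeZero m] (B : Fin n → Matrix (Fin m) (Fin m) ℝ) (p : G2 m n) :
    G2 m n :=
  gmul B (fv (-(p.1 0)), 0) p

/-- The intrinsic dilation `δ_λ(p¹,p²) = (λp¹, λ²p²)`. -/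
noncomputable def gdil {m n : ℕ} (lam : ℝ) (p : G2 m n) : G2 m n := (lam • p.1, (lam ^ 2) • p.2)

/-- The subgroup `N = {(0,x₂,…,x_{m+n})}`. -/
def Nset (m n : ℕ) [NeZero m] : Set (G2 m n) := {p | p.1 0 = 0}


lemma gdil_gdil {m n : ℕ} (a b : ℝ) (p : G2 m n) : gdil a (gdil b p) = gdil (a * b) p := by
  simp [gdil, smul_smul, mul_pow]

lemma gdil_one {m n : ℕ} (p : G2 m n) : gdil 1 p = p := by simp [gdil]

lemma piN_gdil {m n : ℕ} [NeZero m] (B : Fin n → Matrix (Fin m) (Fin m) ℝ) (l : ℝ)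
    (p : G2 m n) : piN B (gdil l p) = gdil l (piN B p) := by
  unfold piN gmul gdil fv
  refine Prod.ext ?_ ?_
  · funext i
    simp only [Pi.add_apply, Pi.smul_apply, smul_eq_mul]
    by_cases h : i = 0 <;> simp [h] <;> ring
  · funext ℓ
    simp only [Pi.add_apply, Pi.smul_apply, smul_eq_mul, Pi.zero_apply, Matrix.mulVec,
      dotProduct, mul_ite, mul_zero, Finset.sum_ite_eq', Finset.mem_univ, if_true,
      mul_add, Finset.mul_sum]
    congr 1
    exact Finset.sum_congr rfl fun i _ => by ring

/-- In a step-2 Carnot group with a distance `d` that is `λ`-homogeneous for the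
dilation `δ_λ`, if `φ : N → G` is an intrinsically `L`-Lipschitz section of `π_N`,
then `δ_λ ∘ φ` is an intrinsically `(max{1,λ}·L)`-Lipschitz section of
`δ_{1/λ} ∘ π_N`. -/
theorem statement_9 {m n : ℕ} [NeZero m]
    (B : Fin n → Matrix (Fin m) (Fin m) ℝ)
    (hskew : ∀ ℓ, (B ℓ)ᵀ = -(B ℓ)) (hli : LinearIndependent ℝ B)
    (lam : ℝ) (hlam : 0 < lam)
    (d : G2 m n → G2 m n → ℝ)
    (hd_eq : ∀ p q : G2 m n, d p q = 0 ↔ p = q)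
    (hd_symm : ∀ p q : G2 m n, d p q = d q p)
    (hd_tri : ∀ p q r : G2 m n, d p r ≤ d p q + d q r)
    (hd_dil : ∀ p q : G2 m n, d (gdil lam p) (gdil lam q) = lam * d p q)
    (φ : Nset m n → G2 m n) (L : ℝ) (hL : 1 ≤ L)
    (hsec : ∀ y : Nset m n, piN B (φ y) = (y : G2 m n))
    (hlip : ∀ y₁ y₂ : Nset m n, d (φ y₁) (φ y₂) ≤
      L * sInf (d (φ y₁) '' {p : G2 m n | piN B p = (y₂ : G2 m n)})) :
    (∀ y : Nset m n, gdil lam⁻¹ (piN B (gdil lam (φ y))) = (y : G2 m n)) ∧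
    (∀ y₁ y₂ : Nset m n, d (gdil lam (φ y₁)) (gdil lam (φ y₂)) ≤
      max 1 lam * L *
        sInf (d (gdil lam (φ y₁)) ''
          {p : G2 m n | gdil lam⁻¹ (piN B p) = (y₂ : G2 m n)})) := by
  have hne : lam ≠ 0 := ne_of_gt hlam
  have hinv : ∀ p : G2 m n, gdil lam⁻¹ (gdil lam p) = p := by
    intro p; rw [gdil_gdil, inv_mul_cancel₀ hne, gdil_one]
  have hinv' : ∀ p : G2 m n, gdil lam (gdil lam⁻¹ p) = p := by
    intro p; rw [gdil_gdil, mul_inv_cancel₀ hne, gdil_one]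
  have hd_nonneg : ∀ p q : G2 m n, 0 ≤ d p q := by
    intro p q
    have h1 : d p p = 0 := (hd_eq p p).2 rfl
    have h2 := hd_tri p q p
    have h3 := hd_symm q p
    linarith
  constructor
  · intro y
    rw [piN_gdil, hinv, hsec]
  · intro y₁ y₂
    have hset : d (gdil lam (φ y₁)) '' {p : G2 m n | gdil lam⁻¹ (piN B p) = (y₂ : G2 m n)}
        = (fun x => lam * x) '' (d (φ y₁) '' {p : G2 m n | piN B p = (y₂ : G2 m n)}) := by
      ext x
      constructor
      · rintro ⟨p, hp, rfl⟩
        refine ⟨d (φ y₁) (gdil lam⁻¹ p), ⟨gdil lam⁻¹ p, ?_, rfl⟩, ?_⟩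
        · show piN B (gdil lam⁻¹ p) = (y₂ : G2 m n)
          rw [piN_gdil]; exact hp
        · show lam * d (φ y₁) (gdil lam⁻¹ p) = d (gdil lam (φ y₁)) p
          rw [← hd_dil, hinv' p]
      · rintro ⟨x, ⟨q, hq, rfl⟩, rfl⟩
        refine ⟨gdil lam q, ?_, ?_⟩
        · show gdil lam⁻¹ (piN B (gdil lam q)) = (y₂ : G2 m n)
          rw [piN_gdil, hinv]; exact hq
        · show d (gdil lam (φ y₁)) (gdil lam q) = lam * d (φ y₁) q
          exact hd_dil _ _
    set S := d (φ y₁) '' {p : G2 m n | piN B p = (y₂ : G2 m n)} with hS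
    have hSnn : 0 ≤ sInf S := by
      apply Real.sInf_nonneg
      rintro x ⟨p, _, rfl⟩
      exact hd_nonneg _ _
    have himg : (fun x => lam * x) '' S = lam • S := by
      rw [← Set.image_smul]; rfl
    have hsinf : sInf (d (gdil lam (φ y₁)) '' {p : G2 m n | gdil lam⁻¹ (piN B p) = (y₂ : G2 m n)})
        = lam * sInf S := by
      rw [hset, himg, Real.sInf_smul_of_nonneg (le_of_lt hlam), smul_eq_mul]
    rw [hsinf, hd_dil]
    have h1 := hlip y₁ y₂
    have h2 : lam * d (φ y₁) (φ y₂) ≤ lam * (L * sInf S) :=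
      mul_le_mul_of_nonneg_left h1 (le_of_lt hlam)
    have h3 : lam * (L * sInf S) ≤ max 1 lam * (lam * (L * sInf S)) := by
      have hnn : 0 ≤ lam * (L * sInf S) := by positivity
      calc lam * (L * sInf S) = 1 * (lam * (L * sInf S)) := by ring
        _ ≤ max 1 lam * (lam * (L * sInf S)) :=
          mul_le_mul_of_nonneg_right (le_max_left 1 lam) hnn
    calc lam * d (φ y₁) (φ y₂) ≤ max 1 lam * (lam * (L * sInf S)) := le_trans h2 h3
      _ = max 1 lam * L * (lam * sInf S) := by ring
end

section
/- Consider a step-2 Carnot group structure on G = ℝ^m × ℝ^n with H, N, π_N as below, and equip ℝ^{m+n} with the Euclidean distance. Let φ, ψ : N → G be intrinsically Lipschitz sections of π_N (with respect to the Euclidean distance) such that A_{1,ℓ}(φ(a), ψ(b)) = A_{2,ℓ}(φ(a), ψ(b)) for all a, b ∈ N and all ℓ = 1,…,n, where for p, q ∈ G one sets A_{1,ℓ}(p,q) := ⟨B⁽ℓ⁾p¹, q¹⟩ − ⟨B⁽ℓ⁾(0,p₂+q₂,…,p_m+q_m), (p₁+q₁,0,…,0)⟩ and A_{2,ℓ}(p,q)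 := ⟨B⁽ℓ⁾(0,p₂,…,p_m),(0,q₂,…,q_m)⟩ + ⟨B⁽ℓ⁾(0,p₂,…,p_m),(p₁,0,…,0)⟩ + ⟨B⁽ℓ⁾(0,q₂,…,q_m),(q₁,0,…,0)⟩. Then there exists L' ≥ 1 such that the pointwise sum φ + ψ is an intrinsically L'-Lipschitz section of (1/2)·π_N; that is, (1/2)·π_N(φ(y)+ψ(y)) = y for all y ∈ N, and |(φ+ψ)(y₁) − (φ+ψ)(y₂)| ≤ L'·dist((φ+ψ)(y₁), {p ∈ G : π_N(p) = 2y₂}) for all y₁, y₂ ∈ N. -/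
open Matrix

/-- The vector `(0,v₂,…,v_m) ∈ ℝ^m` obtained from `v` by killing the first
component. -/
noncomputable def projm {m : ℕ} [NeZero m] (v : Fin m → ℝ) : Fin m → ℝ :=
  fun i => if i = 0 then 0 else v i

/-- `A_{1,ℓ}(p,q) := ⟨B⁽ℓ⁾p¹,q¹⟩ − ⟨B⁽ℓ⁾(0,p₂+q₂,…,p_m+q_m),(p₁+q₁,0,…,0)⟩`. -/
noncomputable def A1 {m n : ℕ} [NeZero m] (B : Fin n → Matrix (Fin m) (Fin m) ℝ)
    (ℓ : Fin n) (p q : G2 m n) : ℝ :=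
  (B ℓ).mulVec p.1 ⬝ᵥ q.1 - (B ℓ).mulVec (projm (p.1 + q.1)) ⬝ᵥ fv (p.1 0 + q.1 0)

/-- `A_{2,ℓ}(p,q) := ⟨B⁽ℓ⁾(0,p₂,…,p_m),(0,q₂,…,q_m)⟩ + ⟨B⁽ℓ⁾(0,p₂,…,p_m),(p₁,0,…,0)⟩
+ ⟨B⁽ℓ⁾(0,q₂,…,q_m),(q₁,0,…,0)⟩`. -/
noncomputable def A2 {m n : ℕ} [NeZero m] (B : Fin n → Matrix (Fin m) (Fin m) ℝ)
    (ℓ : Fin n) (p q : G2 m n) : ℝ :=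
  (B ℓ).mulVec (projm p.1) ⬝ᵥ projm q.1 + (B ℓ).mulVec (projm p.1) ⬝ᵥ fv (p.1 0) +
    (B ℓ).mulVec (projm q.1) ⬝ᵥ fv (q.1 0)

/-- The Euclidean distance on `G = ℝ^m × ℝ^n = ℝ^{m+n}`. -/
noncomputable def eDist {m n : ℕ} (p q : G2 m n) : ℝ :=
  Real.sqrt (∑ i, (p.1 i - q.1 i) ^ 2 + ∑ ℓ, (p.2 ℓ - q.2 ℓ) ^ 2)

-- ============ auxiliary devt ============
namespace S17
set_option linter.unusedSectionVars false

variable {m n : ℕ} [NeZero m]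

/-- `W ℓ v = ⟨B ℓ e₀, v⟩`-type linear functional. -/
noncomputable def Wf (B : Fin n → Matrix (Fin m) (Fin m) ℝ) (ℓ : Fin n) (v : Fin m → ℝ) : ℝ :=
  (B ℓ).mulVec (fv 1) ⬝ᵥ v

/-- Parametrization of the fiber of `piN` over `z ∈ N`. -/
noncomputable def linePt (B : Fin n → Matrix (Fin m) (Fin m) ℝ) (z : G2 m n) (t : ℝ) : G2 m n :=
  (z.1 + fv t, z.2 + (t / 2) • fun ℓ => Wf B ℓ z.1)

lemma fv_apply_zero (c : ℝ) : (fv c : Fin m → ℝ) 0 = c := by simp [fv]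

lemma fv_apply_ne {i : Fin m} (hi : i ≠ 0) (c : ℝ) : (fv c : Fin m → ℝ) i = 0 := by
  simp [fv, hi]

lemma fv_eq_smul (c : ℝ) : (fv c : Fin m → ℝ) = c • fv 1 := by
  funext i; by_cases hi : i = 0 <;> simp [fv, hi]

lemma dot_fv (u : Fin m → ℝ) (c : ℝ) : u ⬝ᵥ fv c = c * u 0 := by
  simp only [dotProduct, fv, mul_ite, mul_zero]
  rw [Finset.sum_ite_eq' Finset.univ (0 : Fin m) (fun i => u i * c)]
  simp [mul_comm]

variable (B : Fin n → Matrix (Fin m) (Fin m) ℝ)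

lemma mulVec_fv (ℓ : Fin n) (c : ℝ) (v : Fin m → ℝ) :
    (B ℓ).mulVec (fv c) ⬝ᵥ v = c * Wf B ℓ v := by
  rw [fv_eq_smul, Matrix.mulVec_smul, smul_dotProduct, smul_eq_mul, Wf]

lemma skew_pair (hskew : ∀ ℓ, (B ℓ)ᵀ = -(B ℓ)) (ℓ : Fin n) (u v : Fin m → ℝ) :
    (B ℓ).mulVec u ⬝ᵥ v = -((B ℓ).mulVec v ⬝ᵥ u) := by
  rw [dotProduct_comm, Matrix.dotProduct_mulVec, ← Matrix.mulVec_transpose, hskew ℓ,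
    Matrix.neg_mulVec, neg_dotProduct]

lemma dot_fv_right (hskew : ∀ ℓ, (B ℓ)ᵀ = -(B ℓ)) (ℓ : Fin n) (c : ℝ) (v : Fin m → ℝ) :
    (B ℓ).mulVec v ⬝ᵥ fv c = -(c * Wf B ℓ v) := by
  rw [skew_pair B hskew ℓ v (fv c), mulVec_fv]

lemma Wf_fv (hskew : ∀ ℓ, (B ℓ)ᵀ = -(B ℓ)) (ℓ : Fin n) (c : ℝ) :
    Wf B ℓ (fv c) = 0 := by
  have h1 : Wf B ℓ (fv 1) = 0 := by
    have := skew_pair B hskew ℓ (fv 1) (fv 1)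
    unfold Wf; linarith [this]
  rw [Wf, dot_fv_right B hskew, h1, mul_zero, neg_zero]


lemma Wf_add (ℓ : Fin n) (u v : Fin m → ℝ) : Wf B ℓ (u + v) = Wf B ℓ u + Wf B ℓ v := by
  simp [Wf, dotProduct_add]

lemma Wf_smul (ℓ : Fin n) (c : ℝ) (v : Fin m → ℝ) : Wf B ℓ (c • v) = c * Wf B ℓ v := by
  simp [Wf, dotProduct_smul]

lemma Wf_zero (ℓ : Fin n) : Wf B ℓ 0 = 0 := by simp [Wf]

lemma fv_neg (c : ℝ) : (fv (-c) : Fin m → ℝ) = -fv c := by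
  funext i; by_cases hi : i = 0 <;> simp [fv, hi]

lemma fv_add (c d : ℝ) : (fv (c + d) : Fin m → ℝ) = fv c + fv d := by
  funext i; by_cases hi : i = 0 <;> simp [fv, hi]

/-- Characterization of the fibers of `piN`. -/
lemma fiber_eq (hskew : ∀ ℓ, (B ℓ)ᵀ = -(B ℓ)) (z : G2 m n) (hz : z.1 0 = 0) :
    {p : G2 m n | piN B p = z} = Set.range (linePt B z) := by
  ext p
  simp only [Set.mem_setOf_eq, Set.mem_range]
  constructor
  · intro hp
    have h1 : fv (-(p.1 0)) + p.1 = z.1 := congrArg Prod.fst hp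
    have h2 : (0 : Fin n → ℝ) + p.2 + (1 / 2 : ℝ) •
        (fun ℓ => (B ℓ).mulVec (fv (-(p.1 0))) ⬝ᵥ p.1) = z.2 := congrArg Prod.snd hp
    set c := p.1 0 with hc
    have hp1 : p.1 = z.1 + fv c := by
      have : p.1 = z.1 - fv (-c) := by rw [← h1]; abel
      rw [this, fv_neg, sub_neg_eq_add]
    refine ⟨c, ?_⟩
    have hW : ∀ ℓ, (B ℓ).mulVec (fv (-c)) ⬝ᵥ p.1 = -(c * Wf B ℓ z.1) := by
      intro ℓ
      rw [mulVec_fv, hp1, Wf_add, Wf_fv B hskew, add_zero]; ring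
    have hp2 : p.2 = z.2 + (c / 2) • fun ℓ => Wf B ℓ z.1 := by
      funext ℓ
      have h2ℓ := congrFun h2 ℓ
      simp only [Pi.add_apply, Pi.zero_apply, Pi.smul_apply, smul_eq_mul, zero_add] at h2ℓ
      rw [hW ℓ] at h2ℓ
      simp only [Pi.add_apply, Pi.smul_apply, smul_eq_mul]
      linarith [h2ℓ]
    exact ((Prod.ext hp1 hp2).symm : linePt B z c = p)
  · rintro ⟨t, rfl⟩
    have hfst : (linePt B z t).1 0 = t := by
      simp [linePt, hz, fv_apply_zero]
    have hW : ∀ ℓ, (B ℓ).mulVec (fv (-t)) ⬝ᵥ (linePt B z t).1 = -(t * Wf B ℓ z.1) := by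
      intro ℓ
      rw [mulVec_fv]
      show -t * Wf B ℓ (z.1 + fv t) = _
      rw [Wf_add, Wf_fv B hskew, add_zero]; ring
    apply Prod.ext
    · show fv (-(linePt B z t).1 0) + (z.1 + fv t) = z.1
      rw [hfst, fv_neg]; abel
    · show (0 : Fin n → ℝ) + (z.2 + (t / 2) • fun ℓ => Wf B ℓ z.1) + (1 / 2 : ℝ) •
        (fun ℓ => (B ℓ).mulVec (fv (-(linePt B z t).1 0)) ⬝ᵥ (linePt B z t).1) = z.2
      rw [hfst]
      funext ℓ
      simp only [Pi.add_apply, Pi.zero_apply, Pi.smul_apply, smul_eq_mul, zero_add, hW ℓ]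
      ring

/-- The key algebraic identity relating `A1 - A2` to the functionals `Wf`. -/
lemma A1_sub_A2 (hskew : ∀ ℓ, (B ℓ)ᵀ = -(B ℓ)) (a b : G2 m n)
    (ha : a.1 0 = 0) (hb : b.1 0 = 0) (s t : ℝ) (ℓ : Fin n) :
    A1 B ℓ (linePt B a s) (linePt B b t) - A2 B ℓ (linePt B a s) (linePt B b t)
      = 2 * (s * Wf B ℓ a.1 + s * Wf B ℓ b.1 + t * Wf B ℓ b.1) := by
  have hsa : (linePt B a s).1 = a.1 + fv s := rfl
  have hsb : (linePt B b t).1 = b.1 + fv t := rfl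
  have h0a : (linePt B a s).1 0 = s := by rw [hsa]; simp [ha, fv_apply_zero]
  have h0b : (linePt B b t).1 0 = t := by rw [hsb]; simp [hb, fv_apply_zero]
  have hproj1 : projm ((linePt B a s).1 + (linePt B b t).1) = a.1 + b.1 := by
    funext i
    by_cases hi : i = 0
    · simp [projm, hi, ha, hb]
    · simp [projm, hi, hsa, hsb, fv_apply_ne hi]
  have hproja : projm (linePt B a s).1 = a.1 := by
    funext i
    by_cases hi : i = 0
    · simp [projm, hi, ha]
    · simp [projm, hi, hsa, fv_apply_ne hi]
  have hprojb : projm (linePt B b t).1 = b.1 := by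
    funext i
    by_cases hi : i = 0
    · simp [projm, hi, hb]
    · simp [projm, hi, hsb, fv_apply_ne hi]
  unfold A1 A2
  rw [hproj1, hproja, hprojb, h0a, h0b, hsa, hsb]
  simp only [Matrix.mulVec_add, add_dotProduct, dotProduct_add, mulVec_fv,
    dot_fv_right B hskew, Wf_fv B hskew]
  ring


lemma sum_sq_fv (u : Fin m → ℝ) (hu : u 0 = 0) (c : ℝ) :
    ∑ i, (u i + fv c i) ^ 2 = c ^ 2 + ∑ i, u i ^ 2 := by
  have h0 : ∀ i : Fin m, (u i + fv c i) ^ 2 = u i ^ 2 + (if i = 0 then c ^ 2 else 0) := by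
    intro i
    by_cases hi : i = 0
    · subst hi; simp [fv, hu]
    · simp [fv, hi]
  rw [Finset.sum_congr rfl (fun i _ => h0 i), Finset.sum_add_distrib,
    Finset.sum_ite_eq' Finset.univ (0 : Fin m) (fun _ => c ^ 2)]
  simp [add_comm]

lemma eDist_val (p q : G2 m n) (c : ℝ) (u : Fin m → ℝ) (V : Fin n → ℝ)
    (hu : u 0 = 0) (h1 : ∀ i, p.1 i - q.1 i = u i + fv c i)
    (h2 : ∀ ℓ, p.2 ℓ - q.2 ℓ = V ℓ) :
    eDist p q = Real.sqrt (c ^ 2 + ∑ i, u i ^ 2 + ∑ ℓ, V ℓ ^ 2) := by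
  unfold eDist
  congr 1
  have e1 : ∑ i, (p.1 i - q.1 i) ^ 2 = ∑ i, (u i + fv c i) ^ 2 :=
    Finset.sum_congr rfl (fun i _ => by rw [h1 i])
  have e2 : ∑ ℓ, (p.2 ℓ - q.2 ℓ) ^ 2 = ∑ ℓ, V ℓ ^ 2 :=
    Finset.sum_congr rfl (fun ℓ _ => by rw [h2 ℓ])
  rw [e1, e2, sum_sq_fv u hu c]

lemma sqrt_le_mul_sqrt {X Y L : ℝ} (hL : 0 ≤ L) (h : X ≤ L ^ 2 * Y) :
    Real.sqrt X ≤ L * Real.sqrt Y := by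
  have h1 := Real.sqrt_le_sqrt h
  rwa [Real.sqrt_mul (by positivity), Real.sqrt_sq hL] at h1

lemma le_of_sqrt_le {X Y L : ℝ} (hX : 0 ≤ X) (hY : 0 ≤ Y)
    (h : Real.sqrt X ≤ L * Real.sqrt Y) : X ≤ L ^ 2 * Y := by
  have h2 : Real.sqrt X ^ 2 ≤ (L * Real.sqrt Y) ^ 2 :=
    pow_le_pow_left₀ (Real.sqrt_nonneg _) h 2
  rwa [Real.sq_sqrt hX, mul_pow, Real.sq_sqrt hY] at h2

/-- Intrinsic Lipschitz bound tested against a single point of the fiber. -/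
lemma lip_bound (hskew : ∀ ℓ, (B ℓ)ᵀ = -(B ℓ)) (f : Nset m n → G2 m n) (L : ℝ) (hL : 1 ≤ L)
    (hlip : ∀ y₁ y₂ : Nset m n, eDist (f y₁) (f y₂) ≤
      L * sInf (eDist (f y₁) '' {p : G2 m n | piN B p = (y₂ : G2 m n)}))
    (y₁ y₂ : Nset m n) (s : ℝ) :
    eDist (f y₁) (f y₂) ≤ L * eDist (f y₁) (linePt B (y₂ : G2 m n) s) := by
  have hmem : linePt B (y₂ : G2 m n) s ∈ {p : G2 m n | piN B p = (y₂ : G2 m n)} := by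
    rw [fiber_eq B hskew _ y₂.2]; exact ⟨s, rfl⟩
  have hbd : BddBelow (eDist (f y₁) '' {p : G2 m n | piN B p = (y₂ : G2 m n)}) := by
    refine ⟨0, ?_⟩
    rintro z ⟨p, -, rfl⟩
    exact Real.sqrt_nonneg _
  have h1 : sInf (eDist (f y₁) '' {p : G2 m n | piN B p = (y₂ : G2 m n)}) ≤
      eDist (f y₁) (linePt B (y₂ : G2 m n) s) := csInf_le hbd ⟨_, hmem, rfl⟩
  exact le_trans (hlip y₁ y₂) (mul_le_mul_of_nonneg_left h1 (by linarith))


/-- Arithmetic endgame, generic case. -/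
lemma alg_easy {Lp Lq A C D E N T : ℝ} (hLp : 1 ≤ Lp) (hLq : 1 ≤ Lq)
    (hD : 0 ≤ D) (hE : 0 ≤ E) (hN : 0 ≤ N)
    (H1 : A ^ 2 + D + E ≤ Lp ^ 2 * (T ^ 2 + D + N))
    (H2 : C ^ 2 + D + E ≤ Lq ^ 2 * (T ^ 2 + D + N)) :
    (A + C) ^ 2 + 4 * D + 4 * E ≤ (5 * Lp * Lq) ^ 2 * (T ^ 2 + 4 * D + 4 * N) := by
  have hQ : 0 ≤ T ^ 2 + D + N := by positivity
  have hs : (A + C) ^ 2 + 4 * D + 4 * E ≤ (2 * Lp ^ 2 + 2 * Lq ^ 2) * (T ^ 2 + D + N) := by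
    nlinarith [sq_nonneg (A - C)]
  have hL2p : 1 ≤ Lp ^ 2 := by nlinarith
  have hL2q : 1 ≤ Lq ^ 2 := by nlinarith
  have e1 : 0 ≤ Lp ^ 2 * (Lq ^ 2 - 1) := mul_nonneg (sq_nonneg _) (by linarith)
  have e2 : 0 ≤ Lq ^ 2 * (Lp ^ 2 - 1) := mul_nonneg (sq_nonneg _) (by linarith)
  have e3 : 0 ≤ Lp ^ 2 * Lq ^ 2 := by positivity
  have hc : 2 * Lp ^ 2 + 2 * Lq ^ 2 ≤ 25 * (Lp ^ 2 * Lq ^ 2) := by nlinarith [e1, e2, e3]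
  have hs2 : (2 * Lp ^ 2 + 2 * Lq ^ 2) * (T ^ 2 + D + N) ≤
      25 * (Lp ^ 2 * Lq ^ 2) * (T ^ 2 + D + N) := mul_le_mul_of_nonneg_right hc hQ
  have hrest : 0 ≤ 25 * (Lp ^ 2 * Lq ^ 2) * (3 * D + 3 * N) := by positivity
  nlinarith [hs, hs2, hrest]

/-- Arithmetic endgame, degenerate case. -/
lemma alg_hard {Lp Lq b1 D E N t : ℝ} (hLp : 1 ≤ Lp) (hLq : 1 ≤ Lq)
    (hD : 0 ≤ D) (hE : 0 ≤ E) (hN : 0 ≤ N)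
    (hb1 : b1 ^ 2 ≤ Lq ^ 2 * D)
    (HF : D + E ≤ Lp ^ 2 * (t ^ 2 + D + N)) :
    b1 ^ 2 + 4 * D + 4 * E ≤ (5 * Lp * Lq) ^ 2 * ((b1 - t) ^ 2 + 4 * D + 4 * N) := by
  have hL2p : 1 ≤ Lp ^ 2 := by nlinarith
  have hL2q : 1 ≤ Lq ^ 2 := by nlinarith
  have h2 : t ^ 2 ≤ 2 * (b1 - t) ^ 2 + 2 * Lq ^ 2 * D := by
    nlinarith [sq_nonneg (2 * b1 - t)]
  have h3 : D + E ≤ Lp ^ 2 * (2 * (b1 - t) ^ 2 + 2 * Lq ^ 2 * D + D + N) := by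
    refine le_trans HF (mul_le_mul_of_nonneg_left (by linarith) (by positivity))
  have e1 : 0 ≤ Lp ^ 2 * (Lq ^ 2 - 1) := mul_nonneg (sq_nonneg _) (by linarith)
  have e2 : 0 ≤ Lq ^ 2 * (Lp ^ 2 - 1) := mul_nonneg (sq_nonneg _) (by linarith)
  have e3 : 0 ≤ Lp ^ 2 * Lq ^ 2 := by positivity
  have k1 : 0 ≤ (25 * Lp ^ 2 * Lq ^ 2 - 8 * Lp ^ 2) * ((b1 - t) ^ 2) :=
    mul_nonneg (by nlinarith [e1, e2, e3]) (sq_nonneg _)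
  have k2 : 0 ≤ (100 * Lp ^ 2 * Lq ^ 2 - Lq ^ 2 - 8 * Lp ^ 2 * Lq ^ 2 - 4 * Lp ^ 2 - 4) * D :=
    mul_nonneg (by nlinarith [e1, e2, e3]) hD
  have k3 : 0 ≤ (100 * Lp ^ 2 * Lq ^ 2 - 4 * Lp ^ 2) * N :=
    mul_nonneg (by nlinarith [e1, e2, e3]) hN
  nlinarith [h3, hb1, k1, k2, k3]

end S17

set_option maxHeartbeats 1000000

/-- If `φ, ψ : N → G` are intrinsically Lipschitz sections of `π_N` (w.r.t. the
Euclidean distance) satisfying the compatibility condition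
`A_{1,ℓ}(φ(a),ψ(b)) = A_{2,ℓ}(φ(a),ψ(b))` for all `a, b ∈ N` and all `ℓ`, then
`φ + ψ` is an intrinsically Lipschitz section of `(1/2)·π_N`. -/
theorem statement_17 {m n : ℕ} [NeZero m]
    (B : Fin n → Matrix (Fin m) (Fin m) ℝ)
    (hskew : ∀ ℓ, (B ℓ)ᵀ = -(B ℓ)) (hli : LinearIndependent ℝ B)
    (φ ψ : Nset m n → G2 m n) (Lφ Lψ : ℝ) (hLφ : 1 ≤ Lφ) (hLψ : 1 ≤ Lψ)
    (hφsec : ∀ y : Nset m n, piN B (φ y) = (y : G2 m n))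
    (hψsec : ∀ y : Nset m n, piN B (ψ y) = (y : G2 m n))
    (hφlip : ∀ y₁ y₂ : Nset m n, eDist (φ y₁) (φ y₂) ≤
      Lφ * sInf (eDist (φ y₁) '' {p : G2 m n | piN B p = (y₂ : G2 m n)}))
    (hψlip : ∀ y₁ y₂ : Nset m n, eDist (ψ y₁) (ψ y₂) ≤
      Lψ * sInf (eDist (ψ y₁) '' {p : G2 m n | piN B p = (y₂ : G2 m n)}))
    (hA : ∀ (a b : Nset m n) (ℓ : Fin n), A1 B ℓ (φ a) (ψ b) = A2 B ℓ (φ a) (ψ b)) :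
    ∃ L' : ℝ, 1 ≤ L' ∧
      (∀ y : Nset m n, ((1 : ℝ) / 2) • piN B (φ y + ψ y) = (y : G2 m n)) ∧
      (∀ y₁ y₂ : Nset m n, eDist (φ y₁ + ψ y₁) (φ y₂ + ψ y₂) ≤
        L' * sInf (eDist (φ y₁ + ψ y₁) ''
          {p : G2 m n | piN B p = (2 : ℝ) • (y₂ : G2 m n)})) := by
  classical
  -- the zero element of N
  have hz0mem : (0 : G2 m n) ∈ Nset m n := by simp [Nset]
  -- representations of the sections along the fibers
  have hrepφ : ∀ y : Nset m n, ∃ t, S17.linePt B (y : G2 m n) t = φ y := by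
    intro y
    have hy : φ y ∈ Set.range (S17.linePt B (y : G2 m n)) := by
      rw [← S17.fiber_eq B hskew _ y.2]; exact hφsec y
    exact hy
  have hrepψ : ∀ y : Nset m n, ∃ t, S17.linePt B (y : G2 m n) t = ψ y := by
    intro y
    have hy : ψ y ∈ Set.range (S17.linePt B (y : G2 m n)) := by
      rw [← S17.fiber_eq B hskew _ y.2]; exact hψsec y
    exact hy
  choose aa haa using hrepφ
  choose bb hbb using hrepψ
  -- the key consequence of hA
  have key : ∀ (y y' : Nset m n) (ℓ : Fin n),
      aa y * S17.Wf B ℓ (y : G2 m n).1 + aa y * S17.Wf B ℓ (y' : G2 m n).1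
        + bb y' * S17.Wf B ℓ (y' : G2 m n).1 = 0 := by
    intro y y' ℓ
    have h := hA y y' ℓ
    rw [← haa y, ← hbb y'] at h
    have h2 := S17.A1_sub_A2 B hskew (y : G2 m n) (y' : G2 m n) y.2 y'.2 (aa y) (bb y') ℓ
    rw [h] at h2
    linarith [h2]
  have C1 : ∀ (y : Nset m n) (ℓ : Fin n), aa y * S17.Wf B ℓ (y : G2 m n).1 = 0 := by
    intro y ℓ
    have h := key y ⟨0, hz0mem⟩ ℓ
    have hW0 : S17.Wf B ℓ ((0 : G2 m n)).1 = 0 := S17.Wf_zero B ℓ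
    rw [hW0] at h
    linarith [h]
  have C2 : ∀ (y y' : Nset m n) (ℓ : Fin n),
      aa y * S17.Wf B ℓ (y' : G2 m n).1 + bb y' * S17.Wf B ℓ (y' : G2 m n).1 = 0 := by
    intro y y' ℓ
    have h := key y y' ℓ
    have h1 := C1 y ℓ
    linarith
  have C3 : ∀ (y : Nset m n) (ℓ : Fin n), bb y * S17.Wf B ℓ (y : G2 m n).1 = 0 := by
    intro y ℓ
    have h := C2 y y ℓ
    have h1 := C1 y ℓ
    linarith
  have C4 : ∀ (y y' : Nset m n) (ℓ : Fin n), aa y * S17.Wf B ℓ (y' : G2 m n).1 = 0 := by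
    intro y y' ℓ
    have h := C2 y y' ℓ
    have h1 := C3 y' ℓ
    linarith
  -- refined representations
  have hφ2 : ∀ y : Nset m n, φ y = ((y : G2 m n).1 + fv (aa y), (y : G2 m n).2) := by
    intro y
    rw [← haa y]
    unfold S17.linePt
    refine Prod.ext rfl ?_
    funext ℓ
    simp only [Pi.add_apply, Pi.smul_apply, smul_eq_mul]
    have h := C1 y ℓ
    have : aa y / 2 * S17.Wf B ℓ (y : G2 m n).1 = 0 := by
      rw [div_mul_eq_mul_div, h, zero_div]
    rw [this, add_zero]
  have hψ2 : ∀ y : Nset m n, ψ y = ((y : G2 m n).1 + fv (bb y), (y : G2 m n).2) := by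
    intro y
    rw [← hbb y]
    unfold S17.linePt
    refine Prod.ext rfl ?_
    funext ℓ
    simp only [Pi.add_apply, Pi.smul_apply, smul_eq_mul]
    have h := C3 y ℓ
    have : bb y / 2 * S17.Wf B ℓ (y : G2 m n).1 = 0 := by
      rw [div_mul_eq_mul_div, h, zero_div]
    rw [this, add_zero]
  refine ⟨5 * Lφ * Lψ, by nlinarith, ?_, ?_⟩
  · -- section property of the sum
    intro y
    have hy : (y : G2 m n).1 0 = 0 := y.2
    have hsum : φ y + ψ y = ((y : G2 m n).1 + fv (aa y) + ((y : G2 m n).1 + fv (bb y)),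
        (y : G2 m n).2 + (y : G2 m n).2) := by
      rw [hφ2 y, hψ2 y]; rfl
    have hp10 : (φ y + ψ y).1 0 = aa y + bb y := by
      rw [hsum]
      simp [hy, S17.fv_apply_zero]
    refine Prod.ext ?_ ?_
    · show (1 / 2 : ℝ) • (fv (-(φ y + ψ y).1 0) + (φ y + ψ y).1) = (y : G2 m n).1
      rw [hp10, hsum]
      funext i
      by_cases hi : i = 0
      · subst hi
        simp only [Pi.smul_apply, Pi.add_apply, smul_eq_mul, S17.fv_apply_zero, hy]
        ring
      · simp only [Pi.smul_apply, Pi.add_apply, smul_eq_mul, S17.fv_apply_ne hi]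
        ring
    · show (1 / 2 : ℝ) • ((0 : Fin n → ℝ) + (φ y + ψ y).2 + (1 / 2 : ℝ) •
        fun ℓ => (B ℓ).mulVec (fv (-(φ y + ψ y).1 0)) ⬝ᵥ (φ y + ψ y).1) = (y : G2 m n).2
      rw [hp10]
      funext ℓ
      have hWsum : (B ℓ).mulVec (fv (-(aa y + bb y))) ⬝ᵥ (φ y + ψ y).1
          = -((aa y + bb y) * (2 * S17.Wf B ℓ (y : G2 m n).1)) := by
        rw [S17.mulVec_fv, hsum]
        show -(aa y + bb y) * S17.Wf B ℓ ((y : G2 m n).1 + fv (aa y) + ((y : G2 m n).1 + fv (bb y))) = _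
        rw [S17.Wf_add, S17.Wf_add, S17.Wf_add, S17.Wf_fv B hskew, S17.Wf_fv B hskew]
        ring
      have ha := C1 y ℓ
      have hb := C3 y ℓ
      simp only [Pi.smul_apply, Pi.add_apply, Pi.zero_apply, smul_eq_mul, hWsum]
      have h2 : (φ y + ψ y).2 ℓ = (y : G2 m n).2 ℓ + (y : G2 m n).2 ℓ := by
        rw [hsum]
        rfl
      rw [h2]
      ring_nf
      nlinarith [ha, hb]
  · -- the intrinsic Lipschitz estimate
    intro y₁ y₂
    have hy1 : (y₁ : G2 m n).1 0 = 0 := y₁.2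
    have hy2 : (y₂ : G2 m n).1 0 = 0 := y₂.2
    have hΔ0 : (y₁ : G2 m n).1 0 - (y₂ : G2 m n).1 0 = 0 := by rw [hy1, hy2, sub_zero]
    -- the Lipschitz inequalities against fiber points, in squared form
    have Hφ : ∀ s : ℝ, (aa y₁ - aa y₂) ^ 2 + (∑ i, ((y₁ : G2 m n).1 i - (y₂ : G2 m n).1 i) ^ 2)
        + (∑ ℓ, ((y₁ : G2 m n).2 ℓ - (y₂ : G2 m n).2 ℓ) ^ 2)
        ≤ Lφ ^ 2 * ((aa y₁ - s) ^ 2 + (∑ i, ((y₁ : G2 m n).1 i - (y₂ : G2 m n).1 i) ^ 2)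
          + (∑ ℓ, ((y₁ : G2 m n).2 ℓ - (y₂ : G2 m n).2 ℓ
              - s / 2 * S17.Wf B ℓ (y₂ : G2 m n).1) ^ 2)) := by
      intro s
      have hlb := S17.lip_bound B hskew φ Lφ hLφ hφlip y₁ y₂ s
      have d1 : eDist (φ y₁) (φ y₂) = Real.sqrt ((aa y₁ - aa y₂) ^ 2
          + (∑ i, ((y₁ : G2 m n).1 i - (y₂ : G2 m n).1 i) ^ 2)
          + (∑ ℓ, ((y₁ : G2 m n).2 ℓ - (y₂ : G2 m n).2 ℓ) ^ 2)) := by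
        refine S17.eDist_val _ _ _ _ _ hΔ0 ?_ ?_
        · intro i
          rw [hφ2 y₁, hφ2 y₂]
          by_cases hi : i = 0
          · subst hi
            simp only [Pi.add_apply, S17.fv_apply_zero]
            ring
          · simp only [Pi.add_apply, S17.fv_apply_ne hi]
            ring
        · intro ℓ
          rw [hφ2 y₁, hφ2 y₂]
      have d2 : eDist (φ y₁) (S17.linePt B (y₂ : G2 m n) s) = Real.sqrt ((aa y₁ - s) ^ 2
          + (∑ i, ((y₁ : G2 m n).1 i - (y₂ : G2 m n).1 i) ^ 2)
          + (∑ ℓ, ((y₁ : G2 m n).2 ℓ - (y₂ : G2 m n).2 ℓ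
              - s / 2 * S17.Wf B ℓ (y₂ : G2 m n).1) ^ 2)) := by
        refine S17.eDist_val _ _ _ _ _ hΔ0 ?_ ?_
        · intro i
          rw [hφ2 y₁]
          show (y₁ : G2 m n).1 i + fv (aa y₁) i - ((y₂ : G2 m n).1 i + fv s i) = _
          by_cases hi : i = 0
          · subst hi
            simp only [S17.fv_apply_zero]
            ring
          · simp only [S17.fv_apply_ne hi]
            ring
        · intro ℓ
          rw [hφ2 y₁]
          show (y₁ : G2 m n).2 ℓ - ((y₂ : G2 m n).2 ℓ
            + (s / 2) * S17.Wf B ℓ (y₂ : G2 m n).1) = _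
          ring
      rw [d1, d2] at hlb
      exact S17.le_of_sqrt_le (by positivity) (by positivity) hlb
    have Hψ : ∀ s : ℝ, (bb y₁ - bb y₂) ^ 2 + (∑ i, ((y₁ : G2 m n).1 i - (y₂ : G2 m n).1 i) ^ 2)
        + (∑ ℓ, ((y₁ : G2 m n).2 ℓ - (y₂ : G2 m n).2 ℓ) ^ 2)
        ≤ Lψ ^ 2 * ((bb y₁ - s) ^ 2 + (∑ i, ((y₁ : G2 m n).1 i - (y₂ : G2 m n).1 i) ^ 2)
          + (∑ ℓ, ((y₁ : G2 m n).2 ℓ - (y₂ : G2 m n).2 ℓ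
              - s / 2 * S17.Wf B ℓ (y₂ : G2 m n).1) ^ 2)) := by
      intro s
      have hlb := S17.lip_bound B hskew ψ Lψ hLψ hψlip y₁ y₂ s
      have d1 : eDist (ψ y₁) (ψ y₂) = Real.sqrt ((bb y₁ - bb y₂) ^ 2
          + (∑ i, ((y₁ : G2 m n).1 i - (y₂ : G2 m n).1 i) ^ 2)
          + (∑ ℓ, ((y₁ : G2 m n).2 ℓ - (y₂ : G2 m n).2 ℓ) ^ 2)) := by
        refine S17.eDist_val _ _ _ _ _ hΔ0 ?_ ?_
        · intro i
          rw [hψ2 y₁, hψ2 y₂]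
          by_cases hi : i = 0
          · subst hi
            simp only [Pi.add_apply, S17.fv_apply_zero]
            ring
          · simp only [Pi.add_apply, S17.fv_apply_ne hi]
            ring
        · intro ℓ
          rw [hψ2 y₁, hψ2 y₂]
      have d2 : eDist (ψ y₁) (S17.linePt B (y₂ : G2 m n) s) = Real.sqrt ((bb y₁ - s) ^ 2
          + (∑ i, ((y₁ : G2 m n).1 i - (y₂ : G2 m n).1 i) ^ 2)
          + (∑ ℓ, ((y₁ : G2 m n).2 ℓ - (y₂ : G2 m n).2 ℓ
              - s / 2 * S17.Wf B ℓ (y₂ : G2 m n).1) ^ 2)) := by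
        refine S17.eDist_val _ _ _ _ _ hΔ0 ?_ ?_
        · intro i
          rw [hψ2 y₁]
          show (y₁ : G2 m n).1 i + fv (bb y₁) i - ((y₂ : G2 m n).1 i + fv s i) = _
          by_cases hi : i = 0
          · subst hi
            simp only [S17.fv_apply_zero]
            ring
          · simp only [S17.fv_apply_ne hi]
            ring
        · intro ℓ
          rw [hψ2 y₁]
          show (y₁ : G2 m n).2 ℓ - ((y₂ : G2 m n).2 ℓ
            + (s / 2) * S17.Wf B ℓ (y₂ : G2 m n).1) = _
          ring
      rw [d1, d2] at hlb
      exact S17.le_of_sqrt_le (by positivity) (by positivity) hlb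
    -- setup for the fiber over 2•y₂
    have h2y2 : ((2 : ℝ) • (y₂ : G2 m n)).1 0 = 0 := by
      simp [Prod.smul_fst, hy2]
    have hfib2 := S17.fiber_eq B hskew ((2 : ℝ) • (y₂ : G2 m n)) h2y2
    have hL' : (0 : ℝ) < 5 * Lφ * Lψ := by nlinarith
    have hne : (eDist (φ y₁ + ψ y₁) ''
        {p : G2 m n | piN B p = (2 : ℝ) • (y₂ : G2 m n)}).Nonempty := by
      refine ⟨eDist (φ y₁ + ψ y₁) (S17.linePt B ((2 : ℝ) • (y₂ : G2 m n)) 0), ⟨_, ?_, rfl⟩⟩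
      rw [hfib2]; exact ⟨0, rfl⟩
    have key2 : ∀ z ∈ (eDist (φ y₁ + ψ y₁) ''
        {p : G2 m n | piN B p = (2 : ℝ) • (y₂ : G2 m n)}),
        eDist (φ y₁ + ψ y₁) (φ y₂ + ψ y₂) ≤ (5 * Lφ * Lψ) * z := by
      rintro z ⟨p, hp, rfl⟩
      rw [hfib2] at hp
      obtain ⟨t, rfl⟩ := hp
      -- squared-distance formulas
      have hx1 : φ y₁ + ψ y₁ = ((y₁ : G2 m n).1 + fv (aa y₁) + ((y₁ : G2 m n).1 + fv (bb y₁)),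
          (y₁ : G2 m n).2 + (y₁ : G2 m n).2) := by rw [hφ2 y₁, hψ2 y₁]; rfl
      have hx2 : φ y₂ + ψ y₂ = ((y₂ : G2 m n).1 + fv (aa y₂) + ((y₂ : G2 m n).1 + fv (bb y₂)),
          (y₂ : G2 m n).2 + (y₂ : G2 m n).2) := by rw [hφ2 y₂, hψ2 y₂]; rfl
      have hΔ0' : 2 * ((y₁ : G2 m n).1 0 - (y₂ : G2 m n).1 0) = 0 := by
        rw [hy1, hy2]; ring
      have dE1 : eDist (φ y₁ + ψ y₁) (φ y₂ + ψ y₂) = Real.sqrt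
          ((aa y₁ + bb y₁ - (aa y₂ + bb y₂)) ^ 2
            + (∑ i, (2 * ((y₁ : G2 m n).1 i - (y₂ : G2 m n).1 i)) ^ 2)
            + (∑ ℓ, (2 * ((y₁ : G2 m n).2 ℓ - (y₂ : G2 m n).2 ℓ)) ^ 2)) := by
        refine S17.eDist_val _ _ _ _ _ hΔ0' ?_ ?_
        · intro i
          rw [hx1, hx2]
          show (y₁ : G2 m n).1 i + fv (aa y₁) i + ((y₁ : G2 m n).1 i + fv (bb y₁) i)
            - ((y₂ : G2 m n).1 i + fv (aa y₂) i + ((y₂ : G2 m n).1 i + fv (bb y₂) i)) = _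
          by_cases hi : i = 0
          · subst hi
            simp only [S17.fv_apply_zero]
            ring
          · simp only [S17.fv_apply_ne hi]
            ring
        · intro ℓ
          rw [hx1, hx2]
          show (y₁ : G2 m n).2 ℓ + (y₁ : G2 m n).2 ℓ
            - ((y₂ : G2 m n).2 ℓ + (y₂ : G2 m n).2 ℓ) = _
          ring
      have hq1 : ∀ i, (S17.linePt B ((2 : ℝ) • (y₂ : G2 m n)) t).1 i
          = 2 * (y₂ : G2 m n).1 i + fv t i := by
        intro i
        have h : (S17.linePt B ((2 : ℝ) • (y₂ : G2 m n)) t).1 i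
            = ((2 : ℝ) • (y₂ : G2 m n)).1 i + fv t i := rfl
        have h2 : ((2 : ℝ) • (y₂ : G2 m n)).1 i = 2 * (y₂ : G2 m n).1 i := rfl
        rw [h, h2]
      have hq2 : ∀ ℓ, (S17.linePt B ((2 : ℝ) • (y₂ : G2 m n)) t).2 ℓ
          = 2 * (y₂ : G2 m n).2 ℓ + t * S17.Wf B ℓ (y₂ : G2 m n).1 := by
        intro ℓ
        have h : (S17.linePt B ((2 : ℝ) • (y₂ : G2 m n)) t).2 ℓ
            = ((2 : ℝ) • (y₂ : G2 m n)).2 ℓ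
              + (t / 2) * S17.Wf B ℓ ((2 : ℝ) • (y₂ : G2 m n)).1 := rfl
        have hW2 : S17.Wf B ℓ ((2 : ℝ) • (y₂ : G2 m n)).1 = 2 * S17.Wf B ℓ (y₂ : G2 m n).1 := by
          have h3 : ((2 : ℝ) • (y₂ : G2 m n)).1 = (2 : ℝ) • (y₂ : G2 m n).1 := rfl
          rw [h3, S17.Wf_smul]
        have h4 : ((2 : ℝ) • (y₂ : G2 m n)).2 ℓ = 2 * (y₂ : G2 m n).2 ℓ := rfl
        rw [h, hW2, h4]
        ring
      have dE2 : eDist (φ y₁ + ψ y₁) (S17.linePt B ((2 : ℝ) • (y₂ : G2 m n)) t) = Real.sqrt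
          ((aa y₁ + bb y₁ - t) ^ 2
            + (∑ i, (2 * ((y₁ : G2 m n).1 i - (y₂ : G2 m n).1 i)) ^ 2)
            + (∑ ℓ, (2 * ((y₁ : G2 m n).2 ℓ - (y₂ : G2 m n).2 ℓ)
                - t * S17.Wf B ℓ (y₂ : G2 m n).1) ^ 2)) := by
        refine S17.eDist_val _ _ _ _ _ hΔ0' ?_ ?_
        · intro i
          rw [hx1, hq1 i]
          show (y₁ : G2 m n).1 i + fv (aa y₁) i + ((y₁ : G2 m n).1 i + fv (bb y₁) i)
            - (2 * (y₂ : G2 m n).1 i + fv t i) = _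
          by_cases hi : i = 0
          · subst hi
            simp only [S17.fv_apply_zero]
            ring
          · simp only [S17.fv_apply_ne hi]
            ring
        · intro ℓ
          rw [hx1, hq2 ℓ]
          show (y₁ : G2 m n).2 ℓ + (y₁ : G2 m n).2 ℓ
            - (2 * (y₂ : G2 m n).2 ℓ + t * S17.Wf B ℓ (y₂ : G2 m n).1) = _
          ring
      rw [dE1, dE2]
      apply S17.sqrt_le_mul_sqrt (le_of_lt hL')
      -- reduce the 2-scaled sums
      have s4D : ∑ i, (2 * ((y₁ : G2 m n).1 i - (y₂ : G2 m n).1 i)) ^ 2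
          = 4 * ∑ i, ((y₁ : G2 m n).1 i - (y₂ : G2 m n).1 i) ^ 2 := by
        rw [Finset.mul_sum]
        exact Finset.sum_congr rfl (fun i _ => by ring)
      have s4E : ∑ ℓ, (2 * ((y₁ : G2 m n).2 ℓ - (y₂ : G2 m n).2 ℓ)) ^ 2
          = 4 * ∑ ℓ, ((y₁ : G2 m n).2 ℓ - (y₂ : G2 m n).2 ℓ) ^ 2 := by
        rw [Finset.mul_sum]
        exact Finset.sum_congr rfl (fun ℓ _ => by ring)
      have s4N : ∑ ℓ, (2 * ((y₁ : G2 m n).2 ℓ - (y₂ : G2 m n).2 ℓ)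
            - t * S17.Wf B ℓ (y₂ : G2 m n).1) ^ 2
          = 4 * ∑ ℓ, ((y₁ : G2 m n).2 ℓ - (y₂ : G2 m n).2 ℓ
            - t / 2 * S17.Wf B ℓ (y₂ : G2 m n).1) ^ 2 := by
        rw [Finset.mul_sum]
        exact Finset.sum_congr rfl (fun ℓ _ => by ring)
      rw [s4D, s4E, s4N]
      have hD2 : 0 ≤ ∑ i, ((y₁ : G2 m n).1 i - (y₂ : G2 m n).1 i) ^ 2 := by positivity
      have hE2 : 0 ≤ ∑ ℓ, ((y₁ : G2 m n).2 ℓ - (y₂ : G2 m n).2 ℓ) ^ 2 := by positivity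
      have hN2 : 0 ≤ ∑ ℓ, ((y₁ : G2 m n).2 ℓ - (y₂ : G2 m n).2 ℓ
          - t / 2 * S17.Wf B ℓ (y₂ : G2 m n).1) ^ 2 := by positivity
      by_cases hcase : ∀ ℓ, bb y₁ * S17.Wf B ℓ (y₂ : G2 m n).1 = 0
      · -- generic case
        have hshift : ∀ (c : ℝ), (∀ ℓ, c * S17.Wf B ℓ (y₂ : G2 m n).1 = 0) →
            ∑ ℓ, ((y₁ : G2 m n).2 ℓ - (y₂ : G2 m n).2 ℓ
              - (t - c) / 2 * S17.Wf B ℓ (y₂ : G2 m n).1) ^ 2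
            = ∑ ℓ, ((y₁ : G2 m n).2 ℓ - (y₂ : G2 m n).2 ℓ
              - t / 2 * S17.Wf B ℓ (y₂ : G2 m n).1) ^ 2 := by
          intro c hc
          refine Finset.sum_congr rfl (fun ℓ _ => ?_)
          have h := hc ℓ
          have he : (y₁ : G2 m n).2 ℓ - (y₂ : G2 m n).2 ℓ
              - (t - c) / 2 * S17.Wf B ℓ (y₂ : G2 m n).1
              = (y₁ : G2 m n).2 ℓ - (y₂ : G2 m n).2 ℓ
              - t / 2 * S17.Wf B ℓ (y₂ : G2 m n).1
              + (c * S17.Wf B ℓ (y₂ : G2 m n).1) / 2 := by ring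
          rw [he, h]
          ring
        have H1 := Hφ (t - bb y₁)
        rw [hshift (bb y₁) hcase] at H1
        have H2 := Hψ (t - aa y₁)
        rw [hshift (aa y₁) (fun ℓ => C4 y₁ y₂ ℓ)] at H2
        have halg := S17.alg_easy (A := aa y₁ - aa y₂) (C := bb y₁ - bb y₂)
          (T := aa y₁ + bb y₁ - t) hLφ hLψ hD2 hE2 hN2
          (by nlinarith [H1]) (by nlinarith [H2])
        nlinarith [halg]
      · -- degenerate case
        push_neg at hcase
        obtain ⟨ℓ0, hℓ0⟩ := hcase
        have hw0 : S17.Wf B ℓ0 (y₂ : G2 m n).1 ≠ 0 := by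
          intro h
          exact hℓ0 (by rw [h, mul_zero])
        have ha1 : aa y₁ = 0 := by
          rcases mul_eq_zero.mp (C4 y₁ y₂ ℓ0) with h | h
          · exact h
          · exact absurd h hw0
        have ha2 : aa y₂ = 0 := by
          rcases mul_eq_zero.mp (C4 y₂ y₂ ℓ0) with h | h
          · exact h
          · exact absurd h hw0
        have hb2 : bb y₂ = 0 := by
          rcases mul_eq_zero.mp (C3 y₂ ℓ0) with h | h
          · exact h
          · exact absurd h hw0
        -- the auxiliary point y₃
        have hp3 : (((y₂ : G2 m n).1, fun ℓ => (y₁ : G2 m n).2 ℓ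
            - bb y₁ / 2 * S17.Wf B ℓ (y₂ : G2 m n).1) : G2 m n) ∈ Nset m n := hy2
        set y₃ : Nset m n := ⟨((y₂ : G2 m n).1, fun ℓ => (y₁ : G2 m n).2 ℓ
            - bb y₁ / 2 * S17.Wf B ℓ (y₂ : G2 m n).1), hp3⟩ with hy₃def
        have hy₃1 : (y₃ : G2 m n).1 = (y₂ : G2 m n).1 := rfl
        have hy₃2 : ∀ ℓ, (y₃ : G2 m n).2 ℓ = (y₁ : G2 m n).2 ℓ
            - bb y₁ / 2 * S17.Wf B ℓ (y₂ : G2 m n).1 := fun ℓ => rfl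
        have hb3 : bb y₃ = 0 := by
          have h := C3 y₃ ℓ0
          rw [hy₃1] at h
          rcases mul_eq_zero.mp h with h' | h'
          · exact h'
          · exact absurd h' hw0
        -- the crucial global inequality: bb y₁ ^ 2 ≤ Lψ ^ 2 * D2
        have hlb := S17.lip_bound B hskew ψ Lψ hLψ hψlip y₁ y₃ (bb y₁)
        have d1 : eDist (ψ y₁) (ψ y₃) = Real.sqrt ((bb y₁) ^ 2
            + (∑ i, ((y₁ : G2 m n).1 i - (y₂ : G2 m n).1 i) ^ 2)
            + (∑ ℓ, (bb y₁ / 2 * S17.Wf B ℓ (y₂ : G2 m n).1) ^ 2)) := by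
          refine S17.eDist_val _ _ _ _ _ hΔ0 ?_ ?_
          · intro i
            rw [hψ2 y₁, hψ2 y₃, hb3]
            show (y₁ : G2 m n).1 i + fv (bb y₁) i - ((y₃ : G2 m n).1 i + fv 0 i) = _
            rw [hy₃1]
            by_cases hi : i = 0
            · subst hi
              simp only [S17.fv_apply_zero]
              ring
            · simp only [S17.fv_apply_ne hi]
              ring
          · intro ℓ
            rw [hψ2 y₁, hψ2 y₃]
            show (y₁ : G2 m n).2 ℓ - (y₃ : G2 m n).2 ℓ = _
            rw [hy₃2 ℓ]
            ring
        have d2 : eDist (ψ y₁) (S17.linePt B (y₃ : G2 m n) (bb y₁)) = Real.sqrt ((0 : ℝ) ^ 2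
            + (∑ i, ((y₁ : G2 m n).1 i - (y₂ : G2 m n).1 i) ^ 2)
            + (∑ _ℓ : Fin n, (0 : ℝ) ^ 2)) := by
          refine S17.eDist_val _ _ _ _ _ hΔ0 ?_ ?_
          · intro i
            rw [hψ2 y₁]
            show (y₁ : G2 m n).1 i + fv (bb y₁) i - ((y₃ : G2 m n).1 i + fv (bb y₁) i) = _
            rw [hy₃1]
            by_cases hi : i = 0
            · subst hi
              simp only [S17.fv_apply_zero]
              ring
            · simp only [S17.fv_apply_ne hi]
              ring
          · intro ℓ
            rw [hψ2 y₁]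
            show (y₁ : G2 m n).2 ℓ - ((y₃ : G2 m n).2 ℓ
              + (bb y₁ / 2) * S17.Wf B ℓ (y₃ : G2 m n).1) = _
            rw [hy₃2 ℓ]
            have : S17.Wf B ℓ (y₃ : G2 m n).1 = S17.Wf B ℓ (y₂ : G2 m n).1 := by rw [hy₃1]
            rw [this]
            ring
        rw [d1, d2] at hlb
        have hsq := S17.le_of_sqrt_le (by positivity) (by positivity) hlb
        have e0 : ∑ _ℓ : Fin n, (0 : ℝ) ^ 2 = 0 := by simp
        rw [e0] at hsq
        have hT : 0 ≤ ∑ ℓ, (bb y₁ / 2 * S17.Wf B ℓ (y₂ : G2 m n).1) ^ 2 := by positivity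
        have hb1sq : (bb y₁) ^ 2 ≤ Lψ ^ 2 * ∑ i, ((y₁ : G2 m n).1 i - (y₂ : G2 m n).1 i) ^ 2 := by
          nlinarith [hsq, hT]
        have HF := Hφ t
        rw [ha1, ha2] at HF
        have halg := S17.alg_hard (b1 := bb y₁) (t := t) hLφ hLψ hD2 hE2 hN2 hb1sq
          (by nlinarith [HF])
        rw [ha1, ha2, hb2]
        nlinarith [halg]
    have hdiv : eDist (φ y₁ + ψ y₁) (φ y₂ + ψ y₂) / (5 * Lφ * Lψ) ≤
        sInf (eDist (φ y₁ + ψ y₁) '' {p : G2 m n | piN B p = (2 : ℝ) • (y₂ : G2 m n)}) :=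
      le_csInf hne (fun z hz => (div_le_iff₀ hL').2 (by
        rw [mul_comm]; exact key2 z hz))
    calc eDist (φ y₁ + ψ y₁) (φ y₂ + ψ y₂)
        = eDist (φ y₁ + ψ y₁) (φ y₂ + ψ y₂) / (5 * Lφ * Lψ) * (5 * Lφ * Lψ) := by
          field_simp
      _ ≤ sInf (eDist (φ y₁ + ψ y₁) ''
            {p : G2 m n | piN B p = (2 : ℝ) • (y₂ : G2 m n)}) * (5 * Lφ * Lψ) :=
          mul_le_mul_of_nonneg_right hdiv (le_of_lt hL')
      _ = (5 * Lφ * Lψ) * sInf (eDist (φ y₁ + ψ y₁) ''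
            {p : G2 m n | piN B p = (2 : ℝ) • (y₂ : G2 m n)}) := mul_comm _ _
end
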